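/- In the group ring Z[C*] (with basis elements ⟨α⟩ for α ∈ ℂ*), define Λ_n = div(t^n - 1) = ∑_{α^n=1} ⟨α⟩. Then for positive integers a and b, Λ_a · Λ_b = gcd(a,b) · Λ_{lcm(a,b)}. -/

import Mathlib

/-- `Λ n` : the formal sum of all `n`-th roots of unity in the group ring `ℤ[ℂˣ]`
(set to `0` in the degenerate case `n = 0`). -/
noncomputable def Lambda (n : ℕ) : MonoidAlgebra ℤ ℂˣ :=
  if h : n = 0 then 0 else
    haveI : NeZero n := ⟨h⟩
    haveI : Fintype (rootsOfUnity n ℂ) := Fintype.ofFinite _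
    ∑ ζ : rootsOfUnity n ℂ, MonoidAlgebra.single (ζ : ℂˣ) (1 : ℤ)

/-!
For finite subgroups `H`, `K` of a commutative group, every element of `H ⊔ K = H K` is a
product `h k` in exactly `|H ⊓ K|` ways (the solutions are `(h₀ c, c⁻¹ k₀)` with `c ∈ H ⊓ K`),
so in the group ring `(∑ H) (∑ K) = |H ⊓ K| • ∑ (H ⊔ K)`. For roots of unity,
`μ_a ⊓ μ_b = μ_gcd(a,b)`, and `μ_a ⊔ μ_b = μ_lcm(a,b)` because it lies in `μ_lcm(a,b)` and its
order is divisible by both `a` and `b`.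
-/

open Finset MonoidAlgebra

namespace Subgroup

variable {G : Type*} [CommGroup G]

theorem card_filter_mul_eq_card_inf (H K : Subgroup G) [Fintype H] [Fintype K] [DecidableEq G]
    {g : G} (hg : g ∈ H ⊔ K) : #{p : H × K | (p.1 : G) * p.2 = g} = Nat.card ↥(H ⊓ K) := by
  obtain ⟨h₀, hh₀, k₀, hk₀, rfl⟩ := mem_sup.mp hg
  rw [← Fintype.card_subtype, ← Nat.card_eq_fintype_card]
  refine Nat.card_congr
    { toFun p := ⟨h₀⁻¹ * p.1.1, mem_inf.mpr ⟨mul_mem (inv_mem hh₀) p.1.1.2, ?_⟩⟩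
      invFun c := ⟨(⟨h₀ * c, mul_mem hh₀ (mem_inf.mp c.2).1⟩,
        ⟨c⁻¹ * k₀, mul_mem (inv_mem (mem_inf.mp c.2).2) hk₀⟩), by simp⟩
      left_inv p := by ext <;> simp [mul_assoc, ← p.2]
      right_inv c := by ext; simp }
  have : h₀⁻¹ * p.1.1 = k₀ * (p.1.2 : G)⁻¹ := by
    rw [inv_mul_eq_iff_eq_mul, ← mul_assoc, eq_mul_inv_iff_mul_eq, p.2]
  rw [this]
  exact mul_mem hk₀ (inv_mem p.1.2.2)

/-- `L` stands for `H ⊔ K` so that the `Fintype` instance on it is not forced on the caller. -/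
theorem sum_single_mul_sum_single {R : Type*} [Semiring R] (H K L : Subgroup G) [Fintype H]
    [Fintype K] [Fintype L] (hL : H ⊔ K = L) :
    (∑ h : H, single (h : G) (1 : R)) * ∑ k : K, single (k : G) (1 : R) =
      Nat.card ↥(H ⊓ K) • ∑ g : L, single (g : G) (1 : R) := by
  classical
  have mem_image_iff (g : G) : g ∈ univ.image (fun p : H × K ↦ (p.1 : G) * p.2) ↔ g ∈ L := by
    simp [← hL, mem_sup']
  calc (∑ h : H, single (h : G) (1 : R)) * ∑ k : K, single (k : G) (1 : R)
      = ∑ p : H × K, single ((p.1 : G) * p.2) (1 : R) := by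
        simp [sum_mul_sum, single_mul_single, Fintype.sum_prod_type]
    _ = ∑ g ∈ univ.image (fun p : H × K ↦ (p.1 : G) * p.2),
          #{p : H × K | (p.1 : G) * p.2 = g} • single g (1 : R) :=
        sum_comp (fun g ↦ single g (1 : R)) _
    _ = ∑ g : L, Nat.card ↥(H ⊓ K) • single (g : G) (1 : R) := by
        rw [sum_subtype _ mem_image_iff]
        exact Fintype.sum_congr _ _ fun g ↦ by rw [card_filter_mul_eq_card_inf H K (hL ▸ g.2)]
    _ = Nat.card ↥(H ⊓ K) • ∑ g : L, single (g : G) (1 : R) := (smul_sum ..).symm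

end Subgroup

theorem rootsOfUnity_sup_rootsOfUnity {M : Type*} [CommMonoid M] (a b : ℕ) [NeZero (a.lcm b)]
    [HasEnoughRootsOfUnity M (a.lcm b)] :
    rootsOfUnity a M ⊔ rootsOfUnity b M = rootsOfUnity (a.lcm b) M := by
  have natCard_of_dvd {n : ℕ} (hn : n ∣ a.lcm b) : Nat.card (rootsOfUnity n M) = n := by
    have : NeZero n := ⟨ne_zero_of_dvd_ne_zero (NeZero.ne _) hn⟩
    have := HasEnoughRootsOfUnity.of_dvd M hn
    exact HasEnoughRootsOfUnity.natCard_rootsOfUnity M n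
  have hle : rootsOfUnity a M ⊔ rootsOfUnity b M ≤ rootsOfUnity (a.lcm b) M :=
    sup_le (rootsOfUnity_le_of_dvd (Nat.dvd_lcm_left a b))
      (rootsOfUnity_le_of_dvd (Nat.dvd_lcm_right a b))
  have : Finite ↥(rootsOfUnity a M ⊔ rootsOfUnity b M) :=
    Finite.of_injective _ (Subgroup.inclusion_injective hle)
  refine Subgroup.eq_of_le_of_card_ge hle (Nat.le_of_dvd Nat.card_pos ?_)
  rw [natCard_of_dvd dvd_rfl]
  refine Nat.lcm_dvd ?_ ?_
  · have := Subgroup.card_dvd_of_le (le_sup_left (a := rootsOfUnity a M) (b := rootsOfUnity b M))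
    rwa [natCard_of_dvd (Nat.dvd_lcm_left a b)] at this
  · have := Subgroup.card_dvd_of_le (le_sup_right (a := rootsOfUnity a M) (b := rootsOfUnity b M))
    rwa [natCard_of_dvd (Nat.dvd_lcm_right a b)] at this

/-- Milnor–Orlik relation: `Λ_a · Λ_b = gcd(a,b) · Λ_{lcm(a,b)}` in `ℤ[ℂˣ]`. -/
theorem lambda_mul_lambda (a b : ℕ) (ha : 0 < a) (hb : 0 < b) :
    Lambda a * Lambda b = (Nat.gcd a b : ℤ) • Lambda (Nat.lcm a b) := by
  have : NeZero (a.gcd b) := ⟨(Nat.gcd_pos_of_pos_left b ha).ne'⟩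
  have : NeZero (a.lcm b) := ⟨(Nat.lcm_pos ha hb).ne'⟩
  simp only [Lambda, dif_neg ha.ne', dif_neg hb.ne', dif_neg (NeZero.ne (a.lcm b))]
  convert Subgroup.sum_single_mul_sum_single _ _ _ (rootsOfUnity_sup_rootsOfUnity (M := ℂ) a b)
    using 1
  rw [rootsOfUnity_inf_rootsOfUnity, Complex.card_rootsOfUnity, natCast_zsmul]
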